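/- arXiv:2203.15740 — 3 statements merged into one kernel-verified Lean document; each statement's English description precedes it below -/
import Mathlib

section
/- Let θ₁, θ₂ ∈ (0,1] and let K be a CZX kernel on ℝ² with constant C_K. Then there is a constant C, depending only on C_K and θ₂, such that for every x = (x¹,x²) ∈ ℝ² and every y² ∈ ℝ with y² ≠ x², one has ∫_ℝ |K(x,(y¹,y²))| dy¹ ≤ C / |x²−y²|. -/
/-!
With `a = |x¹ − y¹|` and `b = |x² − y²|`, the size condition bounds `|K(x,y)|` by
`C_K / b · φ(a)`, where `φ(a) = a⁻¹ (a/b + b/a)^{−θ₂}`. Dropping one of the two summands gives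
`φ(a) ≤ b^{−θ₂} a^{θ₂−1}` and `φ(a) ≤ b^{θ₂} a^{−1−θ₂}`; the first is integrable on `(0, b]`,
the second on `(b, ∞)`, each with integral `1/θ₂`. Integrating `φ(|x¹ − y¹|)` over `y¹ ∈ ℝ`
doubles the half-line integral, so `∫ |K(x,(y¹,y²))| dy¹ ≤ 4 C_K / (θ₂ b)`.
-/

open MeasureTheory Real Set Filter
open scoped ENNReal NNReal

noncomputable section

/-- The decay factor `D_θ(x,y)` appearing in the definition of CZX kernels. -/
def Dfac (θ : ℝ) (x y : ℝ × ℝ) : ℝ :=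
  (|x.1 - y.1| / |x.2 - y.2| + |x.2 - y.2| / |x.1 - y.1|) ^ (-θ)

/-- A CZX kernel on `ℝ²` with Hölder exponent `θ₁`, decay exponent `θ₂` and constant `C`. -/
structure IsCZXKernel (θ₁ θ₂ C : ℝ) (K : ℝ × ℝ → ℝ × ℝ → ℂ) : Prop where
  meas : Measurable fun p : (ℝ × ℝ) × (ℝ × ℝ) => K p.1 p.2
  size : ∀ x y : ℝ × ℝ, x.1 ≠ y.1 → x.2 ≠ y.2 →
    ‖K x y‖ ≤ C * (1 / |x.1 - y.1|) * (1 / |x.2 - y.2|) * Dfac θ₂ x y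
  holder_x1 : ∀ x y : ℝ × ℝ, ∀ w : ℝ, x.1 ≠ y.1 → x.2 ≠ y.2 → |x.1 - w| ≤ |x.1 - y.1| / 2 →
    ‖K x y - K (w, x.2) y‖ ≤
      C * (|x.1 - w| ^ θ₁ / |x.1 - y.1| ^ (1 + θ₁)) * (1 / |x.2 - y.2|) * Dfac θ₂ x y
  holder_x2 : ∀ x y : ℝ × ℝ, ∀ w : ℝ, x.1 ≠ y.1 → x.2 ≠ y.2 → |x.2 - w| ≤ |x.2 - y.2| / 2 →
    ‖K x y - K (x.1, w) y‖ ≤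
      C * (1 / |x.1 - y.1|) * (|x.2 - w| ^ θ₁ / |x.2 - y.2| ^ (1 + θ₁)) * Dfac θ₂ x y
  holder_y1 : ∀ x y : ℝ × ℝ, ∀ w : ℝ, x.1 ≠ y.1 → x.2 ≠ y.2 → |y.1 - w| ≤ |x.1 - y.1| / 2 →
    ‖K x y - K x (w, y.2)‖ ≤
      C * (|y.1 - w| ^ θ₁ / |x.1 - y.1| ^ (1 + θ₁)) * (1 / |x.2 - y.2|) * Dfac θ₂ x y
  holder_y2 : ∀ x y : ℝ × ℝ, ∀ w : ℝ, x.1 ≠ y.1 → x.2 ≠ y.2 → |y.2 - w| ≤ |x.2 - y.2| / 2 →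
    ‖K x y - K x (y.1, w)‖ ≤
      C * (1 / |x.1 - y.1|) * (|y.2 - w| ^ θ₁ / |x.2 - y.2| ^ (1 + θ₁)) * Dfac θ₂ x y

/-- The axes-parallel square with centre `c` and side length `ℓ`. -/
def sqr (c : ℝ × ℝ) (ℓ : ℝ) : Set (ℝ × ℝ) :=
  Icc (c.1 - ℓ / 2) (c.1 + ℓ / 2) ×ˢ Icc (c.2 - ℓ / 2) (c.2 + ℓ / 2)

theorem lintegral_comp_abs (f : ℝ → ℝ≥0∞) :
    ∫⁻ t, f |t| = 2 * ∫⁻ s in Ioi 0, f s := by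
  have hpos : ∫⁻ t in Ioi 0, f |t| = ∫⁻ s in Ioi 0, f s :=
    setLIntegral_congr_fun measurableSet_Ioi fun t ht => by rw [abs_of_pos ht]
  have hneg : ∫⁻ t in Iio 0, f |t| = ∫⁻ s in Ioi 0, f s := calc
    _ = ∫⁻ t in Neg.neg ⁻¹' Ioi 0, f (-t) := by
      rw [neg_preimage, neg_Ioi, neg_zero]
      exact setLIntegral_congr_fun measurableSet_Iio fun t ht => by rw [abs_of_neg ht]
    _ = ∫⁻ s in Ioi 0, f s := (Measure.measurePreserving_neg volume).setLIntegral_comp_preimage_emb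
      (Homeomorph.neg ℝ).measurableEmbedding f _
  rw [← lintegral_add_compl _ measurableSet_Iio, compl_Iio, ← setLIntegral_congr Ioi_ae_eq_Ici,
    hpos, hneg, two_mul]

theorem lintegral_comp_abs_sub (f : ℝ → ℝ≥0∞) (c : ℝ) :
    ∫⁻ t, f |c - t| = 2 * ∫⁻ s in Ioi 0, f s := by
  rw [(Measure.measurePreserving_sub_left volume c).lintegral_comp_emb
    (MeasurableEquiv.subLeft c).measurableEmbedding (fun s => f |s|), lintegral_comp_abs]

theorem setLIntegral_Ioc_rpow {θ b : ℝ} (hθ : 0 < θ) (hb : 0 ≤ b) :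
    ∫⁻ a in Ioc 0 b, ENNReal.ofReal (a ^ (θ - 1)) = ENNReal.ofReal (b ^ θ / θ) := by
  have hint : IntegrableOn (fun a : ℝ => a ^ (θ - 1)) (Ioc 0 b) :=
    (intervalIntegral.intervalIntegrable_rpow' (by linarith)).1
  rw [← ofReal_integral_eq_lintegral_ofReal hint
      (ae_restrict_of_forall_mem measurableSet_Ioc fun a ha => rpow_nonneg ha.1.le _),
    ← intervalIntegral.integral_of_le hb, integral_rpow (Or.inl (by linarith)),
    sub_add_cancel, zero_rpow hθ.ne', sub_zero]

theorem setLIntegral_Ioi_rpow {θ b : ℝ} (hθ : 0 < θ) (hb : 0 < b) :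
    ∫⁻ a in Ioi b, ENNReal.ofReal (a ^ (-1 - θ)) = ENNReal.ofReal (b ^ (-θ) / θ) := by
  have hlt : -1 - θ < -1 := by linarith
  rw [← ofReal_integral_eq_lintegral_ofReal (integrableOn_Ioi_rpow_of_lt hlt hb)
      (ae_restrict_of_forall_mem measurableSet_Ioi fun a ha => rpow_nonneg (hb.trans ha).le _),
    integral_Ioi_rpow_of_lt hlt hb, show -1 - θ + 1 = -θ by ring, neg_div_neg_eq]

def decayProfile (θ b a : ℝ) : ℝ := a⁻¹ * (a / b + b / a) ^ (-θ)

section decayProfile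

variable {θ a b : ℝ}

theorem decayProfile_le_near (hθ : 0 ≤ θ) (ha : 0 < a) (hb : 0 < b) :
    decayProfile θ b a ≤ b ^ (-θ) * a ^ (θ - 1) := calc
  _ ≤ a⁻¹ * (b / a) ^ (-θ) := by
    refine mul_le_mul_of_nonneg_left ?_ (inv_nonneg.mpr ha.le)
    exact rpow_le_rpow_of_nonpos (by positivity) (le_add_of_nonneg_left (by positivity))
      (by linarith)
  _ = b ^ (-θ) * a ^ (θ - 1) := by
    rw [div_rpow hb.le ha.le, rpow_sub_one ha.ne', rpow_neg ha.le]
    field_simp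

theorem decayProfile_le_far (hθ : 0 ≤ θ) (ha : 0 < a) (hb : 0 < b) :
    decayProfile θ b a ≤ b ^ θ * a ^ (-1 - θ) := calc
  _ ≤ a⁻¹ * (a / b) ^ (-θ) := by
    refine mul_le_mul_of_nonneg_left ?_ (inv_nonneg.mpr ha.le)
    exact rpow_le_rpow_of_nonpos (by positivity) (le_add_of_nonneg_right (by positivity))
      (by linarith)
  _ = b ^ θ * a ^ (-1 - θ) := by
    rw [div_rpow ha.le hb.le, sub_eq_add_neg, add_comm, rpow_add ha, rpow_neg_one,
      rpow_neg hb.le, rpow_neg ha.le]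
    field_simp

theorem lintegral_decayProfile_le (hθ : 0 < θ) (hb : 0 < b) :
    ∫⁻ a in Ioi 0, ENNReal.ofReal (decayProfile θ b a) ≤ ENNReal.ofReal (2 / θ) := calc
  _ ≤ (∫⁻ a in Ioc 0 b, ENNReal.ofReal (decayProfile θ b a)) +
      ∫⁻ a in Ioi b, ENNReal.ofReal (decayProfile θ b a) := by
    rw [← Ioc_union_Ioi_eq_Ioi hb.le]
    exact lintegral_union_le _ _ _
  _ ≤ (∫⁻ a in Ioc 0 b, ENNReal.ofReal (b ^ (-θ)) * ENNReal.ofReal (a ^ (θ - 1))) +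
      ∫⁻ a in Ioi b, ENNReal.ofReal (b ^ θ) * ENNReal.ofReal (a ^ (-1 - θ)) := by
    gcongr ?_ + ?_
    · refine setLIntegral_mono' measurableSet_Ioc fun a ha => ?_
      rw [← ENNReal.ofReal_mul (by positivity)]
      exact ENNReal.ofReal_le_ofReal (decayProfile_le_near hθ.le ha.1 hb)
    · refine setLIntegral_mono' measurableSet_Ioi fun a ha => ?_
      rw [← ENNReal.ofReal_mul (by positivity)]
      exact ENNReal.ofReal_le_ofReal (decayProfile_le_far hθ.le (hb.trans ha) hb)
  _ = ENNReal.ofReal (2 / θ) := by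
    rw [lintegral_const_mul' _ _ ENNReal.ofReal_ne_top,
      lintegral_const_mul' _ _ ENNReal.ofReal_ne_top, setLIntegral_Ioc_rpow hθ hb.le,
      setLIntegral_Ioi_rpow hθ hb, ← ENNReal.ofReal_mul (by positivity),
      ← ENNReal.ofReal_mul (by positivity), ← ENNReal.ofReal_add (by positivity) (by positivity),
      rpow_neg hb.le]
    congr 1
    field_simp
    ring

end decayProfile

theorem IsCZXKernel.norm_le_decayProfile {θ₁ θ₂ C : ℝ} {K : ℝ × ℝ → ℝ × ℝ → ℂ}
    (hK : IsCZXKernel θ₁ θ₂ C K) {x y : ℝ × ℝ} (h₁ : x.1 ≠ y.1) (h₂ : x.2 ≠ y.2) :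
    ‖K x y‖ ≤ C / |x.2 - y.2| * decayProfile θ₂ |x.2 - y.2| |x.1 - y.1| := by
  refine (hK.size x y h₁ h₂).trans_eq ?_
  unfold Dfac decayProfile
  ring

/-- for a CZX kernel, `∫_ℝ |K(x,(y¹,y²))| dy¹ ≤ C / |x²−y²|`,
with `C` depending only on `C_K` and `θ₂`. -/
theorem statement0 (θ₂ : ℝ) (hθ₂ : θ₂ ∈ Ioc (0:ℝ) 1) (CK : ℝ) (hCK : 0 < CK) :
    ∃ C : ℝ, 0 < C ∧ ∀ θ₁ : ℝ, θ₁ ∈ Ioc (0:ℝ) 1 →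
      ∀ K : ℝ × ℝ → ℝ × ℝ → ℂ, IsCZXKernel θ₁ θ₂ CK K →
      ∀ x : ℝ × ℝ, ∀ y₂ : ℝ, y₂ ≠ x.2 →
        ∫⁻ y₁ : ℝ, (‖K x (y₁, y₂)‖₊ : ℝ≥0∞) ≤ ENNReal.ofReal (C / |x.2 - y₂|) := by
  refine ⟨4 * CK / θ₂, div_pos (by positivity) hθ₂.1, fun θ₁ _ K hK x y₂ hy₂ => ?_⟩
  set b := |x.2 - y₂|
  have hb : 0 < b := abs_pos.mpr (sub_ne_zero.mpr hy₂.symm)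
  have hpointwise : ∀ᵐ y₁ : ℝ, (‖K x (y₁, y₂)‖₊ : ℝ≥0∞) ≤
      ENNReal.ofReal (CK / b) * ENNReal.ofReal (decayProfile θ₂ b |x.1 - y₁|) := by
    filter_upwards [Measure.ae_ne volume x.1] with y₁ hy₁
    rw [← ENNReal.ofReal_mul (by positivity), ← ENNReal.ofReal_coe_nnreal, coe_nnnorm]
    exact ENNReal.ofReal_le_ofReal (hK.norm_le_decayProfile hy₁.symm hy₂.symm)
  calc _ ≤ ∫⁻ y₁, ENNReal.ofReal (CK / b) * ENNReal.ofReal (decayProfile θ₂ b |x.1 - y₁|) :=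
        lintegral_mono_ae hpointwise
    _ = ENNReal.ofReal (CK / b) * (2 * ∫⁻ a in Ioi 0, ENNReal.ofReal (decayProfile θ₂ b a)) := by
      rw [lintegral_const_mul' _ _ ENNReal.ofReal_ne_top,
        lintegral_comp_abs_sub (fun a => ENNReal.ofReal (decayProfile θ₂ b a))]
    _ ≤ ENNReal.ofReal (CK / b) * (2 * ENNReal.ofReal (2 / θ₂)) := by
      gcongr
      exact lintegral_decayProfile_le hθ₂.1 hb
    _ = ENNReal.ofReal (4 * CK / θ₂ / b) := by
      rw [← ENNReal.ofReal_ofNat 2, ← ENNReal.ofReal_mul (by norm_num),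
        ← ENNReal.ofReal_mul (by positivity)]
      congr 1
      field_simp
      ring
end
end

section
/- Let θ₁, θ₂ ∈ (0,1] and let K be a CZX kernel on ℝ² with constant C_K. Let J = J¹×J² ⊂ ℝ² be an axes-parallel square with side length ℓ(J) and centre c_J = (c_{J¹}, c_{J²}). Then there is a constant C, depending only on C_K, θ₁ and θ₂, such that for all x ∈ J and all y = (y¹,y²) with y¹ ∉ 3J¹ and y² ∉ 3J², |K(x,y) − K(c_J,y)| ≤ C · [1/(dist(y¹,J¹)·dist(y²,J²))] · ℓ(J)^{θ₁} · (min_{i=1,2} dist(y^i,J^i))^{θ₂−θ₁} / (max_{i=1,2} dist(y^i,J^i))^{θ₂}. In particular, with θ := (1/2)·min(θ₁,θ₂), |K(x,y) − K(c_J,y)| ≤ C · ∏_{i=1,2} ℓ(J)^{θ} / dist(y^i,J^i)^{1+θ}. -/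
/-!
Move from `x` to the centre `c` one coordinate at a time, through `(c¹, x²)`, and apply the
Hölder estimate of the kernel in that coordinate. Since `yⁱ ∉ 3Jⁱ`, every `|tⁱ - yⁱ|` with
`tⁱ ∈ Jⁱ` lies between `dᵢ = dist(yⁱ, Jⁱ)` and `2 dᵢ`, so the decay factor `D_{θ₂}` is at most
`2 (min dᵢ / max dᵢ)^θ₂`; this gives the first bound. The second follows because `ℓ ≤ min dᵢ`:
both ratios `ℓ / min dᵢ` and `min dᵢ / max dᵢ` are at most one, so their exponents can be
lowered to `2θ`, and `(ℓ / max dᵢ)^{2θ} ≤ (ℓ / d₁)^θ (ℓ / d₂)^θ`.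
-/

open MeasureTheory Real Set Filter
open scoped ENNReal NNReal

noncomputable section

namespace Metric

variable {α : Type*} [PseudoMetricSpace α] {c t y : α} {r : ℝ}

lemma dist_sub_le_infDist_closedBall (hr : 0 ≤ r) :
    dist y c - r ≤ infDist y (closedBall c r) := by
  refine (le_infDist ⟨c, mem_closedBall_self hr⟩).2 fun z hz => ?_
  linarith [dist_triangle y z c, mem_closedBall.1 hz]

lemma dist_le_two_mul_infDist_closedBall (ht : t ∈ closedBall c r)
    (hy : 3 * r ≤ dist y c) : dist t y ≤ 2 * infDist y (closedBall c r) := by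
  have hr : 0 ≤ r := dist_nonneg.trans (mem_closedBall.1 ht)
  linarith [dist_triangle t c y, mem_closedBall.1 ht, dist_comm c y,
    dist_sub_le_infDist_closedBall (y := y) (c := c) hr]

end Metric

open Metric in
lemma le_infDist_Icc_and_abs_sub_mem_Icc {c ℓ t y : ℝ} (ht : t ∈ Icc (c - ℓ / 2) (c + ℓ / 2))
    (hy : y ∉ Icc (c - 3 * ℓ / 2) (c + 3 * ℓ / 2)) :
    ℓ ≤ infDist y (Icc (c - ℓ / 2) (c + ℓ / 2)) ∧
      |t - y| ∈ Icc (infDist y (Icc (c - ℓ / 2) (c + ℓ / 2)))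
        (2 * infDist y (Icc (c - ℓ / 2) (c + ℓ / 2))) := by
  rw [← Real.closedBall_eq_Icc] at ht ⊢
  have hy' : 3 * (ℓ / 2) ≤ dist y c := by
    rw [Real.dist_eq, le_abs']
    simp only [mem_Icc, not_and_or, not_le] at hy
    rcases hy with hy | hy
    · left; linarith
    · right; linarith
  have hℓ : 0 ≤ ℓ / 2 := dist_nonneg.trans (mem_closedBall.1 ht)
  refine ⟨by linarith [dist_sub_le_infDist_closedBall (y := y) (c := c) hℓ], ?_, ?_⟩
  · rw [← Real.dist_eq, dist_comm]
    exact infDist_le_dist_of_mem ht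
  · rw [← Real.dist_eq]
    exact dist_le_two_mul_infDist_closedBall ht hy'

def holderBound (θ₁ θ₂ ℓ d₁ d₂ : ℝ) : ℝ :=
  1 / (d₁ * d₂) * (ℓ ^ θ₁ * min d₁ d₂ ^ (θ₂ - θ₁) / max d₁ d₂ ^ θ₂)

section holderBound

variable {θ θ₁ θ₂ ℓ d₁ d₂ : ℝ}

lemma holderBound_comm (θ₁ θ₂ ℓ d₁ d₂ : ℝ) :
    holderBound θ₁ θ₂ ℓ d₁ d₂ = holderBound θ₁ θ₂ ℓ d₂ d₁ := by
  rw [holderBound, holderBound, mul_comm d₁, min_comm, max_comm]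

lemma holderBound_eq (hℓ : 0 ≤ ℓ) (hd₁ : 0 < d₁) (hd₂ : 0 < d₂) :
    holderBound θ₁ θ₂ ℓ d₁ d₂ =
      1 / (d₁ * d₂) * ((ℓ / min d₁ d₂) ^ θ₁ * (min d₁ d₂ / max d₁ d₂) ^ θ₂) := by
  have hm : 0 < min d₁ d₂ := lt_min hd₁ hd₂
  have hM : 0 < max d₁ d₂ := hd₁.trans_le (le_max_left _ _)
  rw [holderBound, div_rpow hℓ hm.le, div_rpow hm.le hM.le, rpow_sub hm]
  field_simp

lemma holderBound_le (hθ₁ : 0 ≤ θ₁) (hθ₂ : 0 ≤ θ₂) (hℓ : 0 < ℓ) (h₁ : ℓ ≤ d₁) (h₂ : ℓ ≤ d₂) :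
    holderBound θ₁ θ₂ ℓ d₁ d₂ ≤
      ℓ ^ (min θ₁ θ₂ / 2) / d₁ ^ (1 + min θ₁ θ₂ / 2) *
        (ℓ ^ (min θ₁ θ₂ / 2) / d₂ ^ (1 + min θ₁ θ₂ / 2)) := by
  set μ := min θ₁ θ₂
  have hd₁ : 0 < d₁ := hℓ.trans_le h₁
  have hd₂ : 0 < d₂ := hℓ.trans_le h₂
  set m := min d₁ d₂
  set M := max d₁ d₂
  have hm : 0 < m := lt_min hd₁ hd₂
  have hM : 0 < M := hd₁.trans_le (le_max_left _ _)
  -- both ratios are at most one, so lowering the exponents to `μ` only increases them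
  have hℓm : (ℓ / m) ^ θ₁ ≤ (ℓ / m) ^ μ :=
    rpow_le_rpow_of_exponent_ge (by positivity) ((div_le_one hm).2 (le_min h₁ h₂))
      (min_le_left _ _)
  have hmM : (m / M) ^ θ₂ ≤ (m / M) ^ μ :=
    rpow_le_rpow_of_exponent_ge (by positivity) ((div_le_one hM).2 min_le_max)
      (min_le_right _ _)
  have hℓM : (ℓ / M) ^ μ ≤ (ℓ / d₁) ^ (μ / 2) * (ℓ / d₂) ^ (μ / 2) := by
    rw [← add_halves μ, rpow_add (by positivity), add_halves]
    gcongr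
    exacts [le_max_left _ _, le_max_right _ _]
  have hsplit (d : ℝ) (hd : 0 < d) :
      ℓ ^ (μ / 2) / d ^ (1 + μ / 2) = 1 / d * (ℓ / d) ^ (μ / 2) := by
    rw [rpow_add hd, rpow_one, div_rpow hℓ.le hd.le]
    field_simp
  calc holderBound θ₁ θ₂ ℓ d₁ d₂
      = 1 / (d₁ * d₂) * ((ℓ / m) ^ θ₁ * (m / M) ^ θ₂) := holderBound_eq hℓ.le hd₁ hd₂
    _ ≤ 1 / (d₁ * d₂) * ((ℓ / m) ^ μ * (m / M) ^ μ) := by gcongr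
    _ = 1 / (d₁ * d₂) * (ℓ / M) ^ μ := by
      rw [← mul_rpow (by positivity) (by positivity), div_mul_div_cancel₀ hm.ne']
    _ ≤ 1 / (d₁ * d₂) * ((ℓ / d₁) ^ (μ / 2) * (ℓ / d₂) ^ (μ / 2)) := by gcongr
    _ = _ := by rw [hsplit d₁ hd₁, hsplit d₂ hd₂]; ring

lemma div_add_div_rpow_neg_le {a b : ℝ} (hθ : 0 ≤ θ) (hθ' : θ ≤ 1) (hd₁ : 0 < d₁) (hd₂ : 0 < d₂)
    (ha : a ∈ Icc d₁ (2 * d₁)) (hb : b ∈ Icc d₂ (2 * d₂)) :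
    (a / b + b / a) ^ (-θ) ≤ 2 * (min d₁ d₂ / max d₁ d₂) ^ θ := by
  have ha0 : 0 < a := hd₁.trans_le ha.1
  have hb0 : 0 < b := hd₂.trans_le hb.1
  have hratio : max d₁ d₂ / (2 * min d₁ d₂) ≤ a / b + b / a := by
    rcases le_total d₁ d₂ with h | h
    · have : max d₁ d₂ / (2 * min d₁ d₂) ≤ b / a := by
        rw [max_eq_right h, min_eq_left h]
        exact div_le_div₀ hb0.le hb.1 ha0 ha.2
      linarith [div_pos ha0 hb0]
    · have : max d₁ d₂ / (2 * min d₁ d₂) ≤ a / b := by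
        rw [max_eq_left h, min_eq_right h]
        exact div_le_div₀ ha0.le ha.1 hb0 hb.2
      linarith [div_pos hb0 ha0]
  set m := min d₁ d₂
  set M := max d₁ d₂
  have hm : 0 < m := lt_min hd₁ hd₂
  have hM : 0 < M := hd₁.trans_le (le_max_left _ _)
  calc (a / b + b / a) ^ (-θ)
      ≤ (M / (2 * m)) ^ (-θ) := rpow_le_rpow_of_nonpos (by positivity) hratio (by linarith)
    _ = 2 ^ θ * (m / M) ^ θ := by
      rw [rpow_neg (by positivity), ← inv_rpow (by positivity), inv_div, mul_div_assoc,
        mul_rpow (by norm_num) (by positivity)]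
    _ ≤ 2 * (m / M) ^ θ := by
      gcongr
      exact rpow_le_self_of_one_le one_le_two hθ'

lemma holder_rhs_le_two_mul_holderBound {a b s : ℝ} (hθ₁ : 0 ≤ θ₁) (hθ₂ : 0 ≤ θ₂)
    (hθ₂' : θ₂ ≤ 1) (hd₁ : 0 < d₁) (hd₂ : 0 < d₂) (ha : a ∈ Icc d₁ (2 * d₁))
    (hb : b ∈ Icc d₂ (2 * d₂)) (hs : 0 ≤ s) (hsℓ : s ≤ ℓ) :
    s ^ θ₁ / a ^ (1 + θ₁) * (1 / b) * (a / b + b / a) ^ (-θ₂) ≤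
      2 * holderBound θ₁ θ₂ ℓ d₁ d₂ := by
  have ha0 : 0 < a := hd₁.trans_le ha.1
  have hb0 : 0 < b := hd₂.trans_le hb.1
  have hfirst : s ^ θ₁ / a ^ (1 + θ₁) ≤ 1 / d₁ * (ℓ / min d₁ d₂) ^ θ₁ := by
    rw [rpow_add ha0, rpow_one, show s ^ θ₁ / (a * a ^ θ₁) = 1 / a * (s / a) ^ θ₁ by
      rw [div_rpow hs ha0.le]; ring]
    gcongr
    exacts [ha.1, hs.trans hsℓ, (min_le_left _ _).trans ha.1]
  have hdecay := div_add_div_rpow_neg_le hθ₂ hθ₂' hd₁ hd₂ ha hb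
  calc s ^ θ₁ / a ^ (1 + θ₁) * (1 / b) * (a / b + b / a) ^ (-θ₂)
      ≤ 1 / d₁ * (ℓ / min d₁ d₂) ^ θ₁ * (1 / d₂) * (2 * (min d₁ d₂ / max d₁ d₂) ^ θ₂) := by
        have hℓm : 0 ≤ ℓ / min d₁ d₂ := div_nonneg (hs.trans hsℓ) (lt_min hd₁ hd₂).le
        have hD : 0 ≤ (a / b + b / a) ^ (-θ₂) :=
          rpow_nonneg (add_nonneg (div_pos ha0 hb0).le (div_pos hb0 ha0).le) _
        gcongr ?_ * (1 / ?_) * ?_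
        exact hb.1
    _ = 2 * holderBound θ₁ θ₂ ℓ d₁ d₂ := by
      rw [holderBound_eq (hs.trans hsℓ) hd₁ hd₂]
      ring

end holderBound

namespace IsCZXKernel

variable {θ₁ θ₂ C ℓ d₁ d₂ w : ℝ} {K : ℝ × ℝ → ℝ × ℝ → ℂ} {x y : ℝ × ℝ}

lemma norm_sub_update_fst_le (hK : IsCZXKernel θ₁ θ₂ C K) (hθ₁ : 0 ≤ θ₁) (hθ₂ : 0 ≤ θ₂)
    (hθ₂' : θ₂ ≤ 1) (hC : 0 ≤ C) (hd₁ : 0 < d₁) (hd₂ : 0 < d₂)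
    (h₁ : |x.1 - y.1| ∈ Icc d₁ (2 * d₁)) (h₂ : |x.2 - y.2| ∈ Icc d₂ (2 * d₂))
    (hwℓ : |x.1 - w| ≤ ℓ) (hw : |x.1 - w| ≤ |x.1 - y.1| / 2) :
    ‖K x y - K (w, x.2) y‖ ≤ 2 * C * holderBound θ₁ θ₂ ℓ d₁ d₂ := by
  have hxy₁ : x.1 ≠ y.1 := sub_ne_zero.1 (abs_pos.1 (hd₁.trans_le h₁.1))
  have hxy₂ : x.2 ≠ y.2 := sub_ne_zero.1 (abs_pos.1 (hd₂.trans_le h₂.1))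
  calc ‖K x y - K (w, x.2) y‖
      ≤ C * (|x.1 - w| ^ θ₁ / |x.1 - y.1| ^ (1 + θ₁) * (1 / |x.2 - y.2|) *
          (|x.1 - y.1| / |x.2 - y.2| + |x.2 - y.2| / |x.1 - y.1|) ^ (-θ₂)) := by
        simpa only [Dfac, mul_assoc] using hK.holder_x1 x y w hxy₁ hxy₂ hw
    _ ≤ C * (2 * holderBound θ₁ θ₂ ℓ d₁ d₂) :=
        mul_le_mul_of_nonneg_left
          (holder_rhs_le_two_mul_holderBound hθ₁ hθ₂ hθ₂' hd₁ hd₂ h₁ h₂ (abs_nonneg _) hwℓ) hC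
    _ = 2 * C * holderBound θ₁ θ₂ ℓ d₁ d₂ := by ring

lemma norm_sub_update_snd_le (hK : IsCZXKernel θ₁ θ₂ C K) (hθ₁ : 0 ≤ θ₁) (hθ₂ : 0 ≤ θ₂)
    (hθ₂' : θ₂ ≤ 1) (hC : 0 ≤ C) (hd₁ : 0 < d₁) (hd₂ : 0 < d₂)
    (h₁ : |x.1 - y.1| ∈ Icc d₁ (2 * d₁)) (h₂ : |x.2 - y.2| ∈ Icc d₂ (2 * d₂))
    (hwℓ : |x.2 - w| ≤ ℓ) (hw : |x.2 - w| ≤ |x.2 - y.2| / 2) :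
    ‖K x y - K (x.1, w) y‖ ≤ 2 * C * holderBound θ₁ θ₂ ℓ d₁ d₂ := by
  have hxy₁ : x.1 ≠ y.1 := sub_ne_zero.1 (abs_pos.1 (hd₁.trans_le h₁.1))
  have hxy₂ : x.2 ≠ y.2 := sub_ne_zero.1 (abs_pos.1 (hd₂.trans_le h₂.1))
  calc ‖K x y - K (x.1, w) y‖
      ≤ C * (|x.2 - w| ^ θ₁ / |x.2 - y.2| ^ (1 + θ₁) * (1 / |x.1 - y.1|) *
          (|x.2 - y.2| / |x.1 - y.1| + |x.1 - y.1| / |x.2 - y.2|) ^ (-θ₂)) := by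
        refine (hK.holder_x2 x y w hxy₁ hxy₂ hw).trans_eq ?_
        rw [Dfac, add_comm (|x.1 - y.1| / _)]
        ring
    _ ≤ C * (2 * holderBound θ₁ θ₂ ℓ d₂ d₁) :=
        mul_le_mul_of_nonneg_left
          (holder_rhs_le_two_mul_holderBound hθ₁ hθ₂ hθ₂' hd₂ hd₁ h₂ h₁ (abs_nonneg _) hwℓ) hC
    _ = 2 * C * holderBound θ₁ θ₂ ℓ d₁ d₂ := by rw [holderBound_comm]; ring

end IsCZXKernel

/-- Lemma 2.3, the Hölder-type estimate away from a square `J`,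
in terms of the distances of `y¹, y²` to the component intervals of `J`. -/
theorem statement2 (θ₁ θ₂ : ℝ) (hθ₁ : θ₁ ∈ Ioc (0:ℝ) 1) (hθ₂ : θ₂ ∈ Ioc (0:ℝ) 1)
    (CK : ℝ) (hCK : 0 < CK) :
    ∃ C : ℝ, 0 < C ∧ ∀ K : ℝ × ℝ → ℝ × ℝ → ℂ, IsCZXKernel θ₁ θ₂ CK K →
      ∀ (c : ℝ × ℝ) (ℓ : ℝ), 0 < ℓ → ∀ x ∈ sqr c ℓ, ∀ y : ℝ × ℝ,
        y.1 ∉ Icc (c.1 - 3 * ℓ / 2) (c.1 + 3 * ℓ / 2) →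
        y.2 ∉ Icc (c.2 - 3 * ℓ / 2) (c.2 + 3 * ℓ / 2) →
        (let d₁ : ℝ := Metric.infDist y.1 (Icc (c.1 - ℓ / 2) (c.1 + ℓ / 2));
         let d₂ : ℝ := Metric.infDist y.2 (Icc (c.2 - ℓ / 2) (c.2 + ℓ / 2));
         let θ : ℝ := min θ₁ θ₂ / 2;
         ‖K x y - K c y‖ ≤
            C * (1 / (d₁ * d₂)) * (ℓ ^ θ₁ * (min d₁ d₂) ^ (θ₂ - θ₁) / (max d₁ d₂) ^ θ₂) ∧
         ‖K x y - K c y‖ ≤ C * (ℓ ^ θ / d₁ ^ (1 + θ)) * (ℓ ^ θ / d₂ ^ (1 + θ))) := by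
  refine ⟨4 * CK, by positivity, fun K hK c ℓ hℓ x hx y hy₁ hy₂ => ?_⟩
  intro d₁ d₂ θ
  have hc₁ : c.1 ∈ Icc (c.1 - ℓ / 2) (c.1 + ℓ / 2) := ⟨by linarith, by linarith⟩
  obtain ⟨hd₁, hxy₁⟩ : ℓ ≤ d₁ ∧ |x.1 - y.1| ∈ Icc d₁ (2 * d₁) :=
    le_infDist_Icc_and_abs_sub_mem_Icc hx.1 hy₁
  obtain ⟨hd₂, hxy₂⟩ : ℓ ≤ d₂ ∧ |x.2 - y.2| ∈ Icc d₂ (2 * d₂) :=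
    le_infDist_Icc_and_abs_sub_mem_Icc hx.2 hy₂
  obtain ⟨-, hcy₁⟩ : ℓ ≤ d₁ ∧ |c.1 - y.1| ∈ Icc d₁ (2 * d₁) :=
    le_infDist_Icc_and_abs_sub_mem_Icc hc₁ hy₁
  have hxc₁ : |x.1 - c.1| ≤ ℓ / 2 :=
    abs_sub_le_iff.2 ⟨by linarith [hx.1.2], by linarith [hx.1.1]⟩
  have hxc₂ : |x.2 - c.2| ≤ ℓ / 2 :=
    abs_sub_le_iff.2 ⟨by linarith [hx.2.2], by linarith [hx.2.1]⟩
  have hθ₁' : 0 ≤ θ₁ := hθ₁.1.le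
  have hd₁0 : 0 < d₁ := hℓ.trans_le hd₁
  have hd₂0 : 0 < d₂ := hℓ.trans_le hd₂
  have hfst : ‖K x y - K (c.1, x.2) y‖ ≤ 2 * CK * holderBound θ₁ θ₂ ℓ d₁ d₂ :=
    hK.norm_sub_update_fst_le hθ₁' hθ₂.1.le hθ₂.2 hCK.le hd₁0 hd₂0 hxy₁ hxy₂ (by linarith)
      (by linarith [hxy₁.1])
  have hsnd : ‖K (c.1, x.2) y - K c y‖ ≤ 2 * CK * holderBound θ₁ θ₂ ℓ d₁ d₂ :=
    hK.norm_sub_update_snd_le (x := (c.1, x.2)) hθ₁' hθ₂.1.le hθ₂.2 hCK.le hd₁0 hd₂0 hcy₁ hxy₂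
      (by simpa using by linarith) (by simpa using by linarith [hxy₂.1])
  have hmain : ‖K x y - K c y‖ ≤ 4 * CK * holderBound θ₁ θ₂ ℓ d₁ d₂ := by
    linarith [norm_sub_le_norm_sub_add_norm_sub (K x y) (K (c.1, x.2) y) (K c y)]
  refine ⟨hmain.trans_eq (by rw [holderBound]; ring), hmain.trans ?_⟩
  calc 4 * CK * holderBound θ₁ θ₂ ℓ d₁ d₂
      ≤ 4 * CK * (ℓ ^ θ / d₁ ^ (1 + θ) * (ℓ ^ θ / d₂ ^ (1 + θ))) := by
        gcongr
        exact holderBound_le hθ₁' hθ₂.1.le hℓ hd₁ hd₂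
    _ = 4 * CK * (ℓ ^ θ / d₁ ^ (1 + θ)) * (ℓ ^ θ / d₂ ^ (1 + θ)) := by ring
end
end

section
/- Let p ∈ (1,∞), θ₂ ∈ (0,1], and let φ : ℝ → [0,∞) be measurable with φ(t) ≥ 1 for all t ∈ [−1,1]. For t₁, t₂ > 0 set K_{t₁,t₂,θ₂}(x) := (t₁/t₂ + t₂/t₁)^{−θ₂}(1/t₁)φ(x₁/t₁)(1/t₂)φ(x₂/t₂). Let w be a weight on ℝ² such that σ := w^{−1/(p−1)} is locally integrable, and suppose N < ∞ is such that ‖K_{t₁,t₂,θ₂} * f‖_{L^p(w)} ≤ N ‖f‖_{L^p(w)} for all t₁, t₂ > 0 and all nonnegative f ∈ L^p(w). Then there is an absolute constant C such that for every axes-parallel rectangle R ⊂ ℝ², ⟨w⟩_R^{1/p} ⟨σ⟩_R^{1/p'} ≤ C N · ecc(R)^{θ₂}, where 1/p + 1/p' = 1. -/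
open MeasureTheory Real Set Filter
open scoped ENNReal NNReal

noncomputable section

/-- The axes-parallel rectangle with centre `c` and side lengths `t₁, t₂`. -/
def rect (c : ℝ × ℝ) (t₁ t₂ : ℝ) : Set (ℝ × ℝ) :=
  Icc (c.1 - t₁ / 2) (c.1 + t₁ / 2) ×ˢ Icc (c.2 - t₂ / 2) (c.2 + t₂ / 2)

/-- The real-valued kernel `K_{t₁,t₂,θ₂}` built from a nonnegative bump function `φ`. -/
def KphiR (θ₂ t₁ t₂ : ℝ) (φ : ℝ → ℝ) (x : ℝ × ℝ) : ℝ :=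
  (t₁ / t₂ + t₂ / t₁) ^ (-θ₂) * ((1 / t₁) * φ (x.1 / t₁)) * ((1 / t₂) * φ (x.2 / t₂))

/-! Test the bound on `f = σ 1_R`. Since `φ ≥ 1` on `[-1, 1]`, the kernel is at least
`δ = (t₁/t₂ + t₂/t₁)^{-θ₂} / |R|` on `R - R`, so `K * f ≥ δ σ(R)` on `R`; and `σ^p w = σ` gives
`‖f‖_{L^p(w)}^p = σ(R)`. Hence `δ σ(R) w(R)^{1/p} ≤ N σ(R)^{1/p}`, i.e.
`⟨w⟩_R^{1/p} ⟨σ⟩_R^{1/p'} ≤ N (t₁/t₂ + t₂/t₁)^{θ₂} ≤ 2 N ecc(R)^{θ₂}`. -/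

theorem ENNReal.mul_rpow_mul_rpow_le_of_mul_le {a A B N : ℝ≥0∞} {q q' : ℝ} (hq' : 0 < q')
    (hqq' : q + q' = 1) (hB : B ≠ ⊤) (h : a * B * A ^ q ≤ N * B ^ q) :
    a * A ^ q * B ^ q' ≤ N := by
  rcases eq_or_ne B 0 with rfl | hB0
  · simp [ENNReal.zero_rpow_of_pos hq']
  have hBq0 : B ^ q ≠ 0 := (ENNReal.rpow_pos (pos_iff_ne_zero.mpr hB0) hB).ne'
  rw [← ENNReal.mul_le_mul_iff_left hBq0 (ENNReal.rpow_ne_top_of_ne_zero hB0 hB)]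
  calc a * A ^ q * B ^ q' * B ^ q = a * B ^ (q + q') * A ^ q := by
        rw [ENNReal.rpow_add _ _ hB0 hB]; ring
    _ ≤ N * B ^ q := by rwa [hqq', ENNReal.rpow_one]

theorem ENNReal.div_rpow_mul_div_rpow {A B V : ℝ≥0∞} {q q' : ℝ} (hq : 0 ≤ q) (hq' : 0 ≤ q')
    (hqq' : q + q' = 1) (hV0 : V ≠ 0) (hV : V ≠ ⊤) :
    (A / V) ^ q * (B / V) ^ q' = A ^ q * B ^ q' / V := by
  have hVinv : V⁻¹ ^ q * V⁻¹ ^ q' = V⁻¹ := by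
    rw [← ENNReal.rpow_add _ _ (ENNReal.inv_ne_zero.mpr hV) (ENNReal.inv_ne_top.mpr hV0), hqq',
      ENNReal.rpow_one]
  rw [div_eq_mul_inv, div_eq_mul_inv, div_eq_mul_inv, ENNReal.mul_rpow_of_nonneg _ _ hq,
    ENNReal.mul_rpow_of_nonneg _ _ hq', mul_mul_mul_comm, hVinv]

theorem Real.rpow_neg_one_div_sub_one_rpow_mul_self {w p : ℝ} (hw : 0 < w) (hp : p ≠ 1) :
    (w ^ (-1 / (p - 1))) ^ p * w = w ^ (-1 / (p - 1)) := by
  have hp1 : p - 1 ≠ 0 := sub_ne_zero.mpr hp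
  rw [← Real.rpow_mul hw.le, ← Real.rpow_add_one hw.ne']
  congr 1
  field_simp
  ring

theorem Real.add_rpow_le_two_mul_max_rpow {a b θ : ℝ} (ha : 0 ≤ a) (hb : 0 ≤ b) (hθ : θ ∈ Icc 0 1) :
    (a + b) ^ θ ≤ 2 * max a b ^ θ :=
  calc (a + b) ^ θ ≤ a ^ θ + b ^ θ := Real.rpow_add_le_add_rpow ha hb hθ.1 hθ.2
    _ ≤ max a b ^ θ + max a b ^ θ := add_le_add
        (Real.rpow_le_rpow ha (le_max_left a b) hθ.1) (Real.rpow_le_rpow hb (le_max_right a b) hθ.1)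
    _ = 2 * max a b ^ θ := by ring

section Testing

variable {α : Type*} [MeasurableSpace α] {μ : Measure α} {K : α → α → ℝ} {w σ : α → ℝ}
  {R : Set α} {p δ : ℝ}

theorem lintegral_indicator_rpow_mul_eq (hR : MeasurableSet R) (hp : 0 < p) (hσ : ∀ x, 0 ≤ σ x)
    (hσw : ∀ x, σ x ^ p * w x = σ x) :
    ∫⁻ x, ENNReal.ofReal (R.indicator σ x) ^ p * ENNReal.ofReal (w x) ∂μ =
      ∫⁻ x in R, ENNReal.ofReal (σ x) ∂μ := by
  rw [← lintegral_indicator hR]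
  congr 1 with x
  by_cases hx : x ∈ R
  · rw [indicator_of_mem hx, indicator_of_mem hx, ENNReal.ofReal_rpow_of_nonneg (hσ x) hp.le,
      ← ENNReal.ofReal_mul (Real.rpow_nonneg (hσ x) p), hσw]
  · simp [indicator_of_notMem hx, ENNReal.zero_rpow_of_pos hp]

theorem ofReal_mul_setLIntegral_le_lintegral_kernel (hR : MeasurableSet R) (hσ : ∀ x, 0 ≤ σ x)
    (hδ : 0 ≤ δ) (hK : ∀ x ∈ R, ∀ y ∈ R, δ ≤ K x y) {x : α} (hx : x ∈ R) :
    ENNReal.ofReal δ * ∫⁻ y in R, ENNReal.ofReal (σ y) ∂μ ≤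
      ∫⁻ y, ENNReal.ofReal (K x y * R.indicator σ y) ∂μ := by
  rw [← lintegral_const_mul' _ _ ENNReal.ofReal_ne_top]
  refine le_trans (setLIntegral_mono' hR fun y hy => ?_) (setLIntegral_le_lintegral R _)
  rw [indicator_of_mem hy, ← ENNReal.ofReal_mul hδ]
  exact ENNReal.ofReal_le_ofReal (mul_le_mul_of_nonneg_right (hK x hx y hy) (hσ y))

theorem ofReal_mul_setLIntegral_rpow_mul_setLIntegral_rpow_le {p' N : ℝ} (hR : MeasurableSet R)
    (hp : 1 < p) (hpp' : 1 / p + 1 / p' = 1) (hσ : ∀ x, 0 ≤ σ x) (hσw : ∀ x, σ x ^ p * w x = σ x)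
    (hσR : ∫⁻ x in R, ENNReal.ofReal (σ x) ∂μ ≠ ⊤) (hδ : 0 ≤ δ)
    (hK : ∀ x ∈ R, ∀ y ∈ R, δ ≤ K x y)
    (hbound : (∫⁻ x, (∫⁻ y, ENNReal.ofReal (K x y * R.indicator σ y) ∂μ) ^ p *
        ENNReal.ofReal (w x) ∂μ) ^ (1 / p) ≤
      ENNReal.ofReal N *
        (∫⁻ x, ENNReal.ofReal (R.indicator σ x) ^ p * ENNReal.ofReal (w x) ∂μ) ^ (1 / p)) :
    ENNReal.ofReal δ * (∫⁻ x in R, ENNReal.ofReal (w x) ∂μ) ^ (1 / p) *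
      (∫⁻ x in R, ENNReal.ofReal (σ x) ∂μ) ^ (1 / p') ≤ ENNReal.ofReal N := by
  set A := ∫⁻ x in R, ENNReal.ofReal (w x) ∂μ
  set B := ∫⁻ x in R, ENNReal.ofReal (σ x) ∂μ
  have hp0 : 0 < p := one_pos.trans hp
  have hp' : 0 < 1 / p' := by linarith [(div_lt_one hp0).mpr hp]
  rw [lintegral_indicator_rpow_mul_eq hR hp0 hσ hσw] at hbound
  have hpow : (ENNReal.ofReal δ * B) ^ p * A ≤
      ∫⁻ x, (∫⁻ y, ENNReal.ofReal (K x y * R.indicator σ y) ∂μ) ^ p * ENNReal.ofReal (w x) ∂μ :=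
    calc (ENNReal.ofReal δ * B) ^ p * A
        = ∫⁻ x in R, (ENNReal.ofReal δ * B) ^ p * ENNReal.ofReal (w x) ∂μ :=
          (lintegral_const_mul' _ _ (ENNReal.rpow_ne_top_of_nonneg hp0.le
            (ENNReal.mul_ne_top ENNReal.ofReal_ne_top hσR))).symm
      _ ≤ _ := setLIntegral_mono' hR fun x hx => by
          gcongr; exact ofReal_mul_setLIntegral_le_lintegral_kernel hR hσ hδ hK hx
      _ ≤ _ := setLIntegral_le_lintegral R _
  refine ENNReal.mul_rpow_mul_rpow_le_of_mul_le hp' hpp' hσR (le_trans ?_ hbound)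
  calc ENNReal.ofReal δ * B * A ^ (1 / p) = ((ENNReal.ofReal δ * B) ^ p * A) ^ (1 / p) := by
        rw [ENNReal.mul_rpow_of_nonneg _ _ (by positivity), ← ENNReal.rpow_mul,
          mul_one_div_cancel hp0.ne', ENNReal.rpow_one]
    _ ≤ _ := by gcongr

end Testing

theorem measurableSet_rect (c : ℝ × ℝ) (t₁ t₂ : ℝ) : MeasurableSet (rect c t₁ t₂) :=
  measurableSet_Icc.prod measurableSet_Icc

theorem isCompact_rect (c : ℝ × ℝ) (t₁ t₂ : ℝ) : IsCompact (rect c t₁ t₂) :=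
  isCompact_Icc.prod isCompact_Icc

theorem volume_rect (c : ℝ × ℝ) {t₁ t₂ : ℝ} (h₁ : 0 ≤ t₁) :
    volume (rect c t₁ t₂) = ENNReal.ofReal (t₁ * t₂) := by
  rw [rect, Measure.volume_eq_prod, Measure.prod_prod, Real.volume_Icc, Real.volume_Icc,
    ← ENNReal.ofReal_mul (by linarith)]
  ring_nf

theorem div_le_KphiR_sub_of_mem_rect {θ₂ t₁ t₂ : ℝ} (ht₁ : 0 < t₁) (ht₂ : 0 < t₂) {φ : ℝ → ℝ}
    (hφ0 : ∀ t, 0 ≤ φ t) (hφ1 : ∀ t ∈ Icc (-1:ℝ) 1, 1 ≤ φ t) {c x y : ℝ × ℝ}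
    (hx : x ∈ rect c t₁ t₂) (hy : y ∈ rect c t₁ t₂) :
    (t₁ / t₂ + t₂ / t₁) ^ (-θ₂) / (t₁ * t₂) ≤ KphiR θ₂ t₁ t₂ φ (x - y) := by
  obtain ⟨⟨hx₁, hx₁'⟩, hx₂, hx₂'⟩ := hx
  obtain ⟨⟨hy₁, hy₁'⟩, hy₂, hy₂'⟩ := hy
  have h₁ : 1 ≤ φ ((x - y).1 / t₁) := hφ1 _
    ⟨by rw [le_div_iff₀ ht₁, Prod.fst_sub]; linarith,
      by rw [div_le_one ht₁, Prod.fst_sub]; linarith⟩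
  have h₂ : 1 ≤ φ ((x - y).2 / t₂) := hφ1 _
    ⟨by rw [le_div_iff₀ ht₂, Prod.snd_sub]; linarith,
      by rw [div_le_one ht₂, Prod.snd_sub]; linarith⟩
  calc (t₁ / t₂ + t₂ / t₁) ^ (-θ₂) / (t₁ * t₂)
      = (t₁ / t₂ + t₂ / t₁) ^ (-θ₂) * ((1 / t₁) * 1) * ((1 / t₂) * 1) := by field_simp
    _ ≤ KphiR θ₂ t₁ t₂ φ (x - y) := by
        unfold KphiR
        have := hφ0 ((x - y).1 / t₁)
        gcongr

/-- if all the operators `f ↦ K_{t₁,t₂,θ₂} * f` are uniformly bounded on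
`L^p(w)` with constant `N`, then `⟨w⟩_R^{1/p} ⟨σ⟩_R^{1/p'} ≤ C·N·ecc(R)^{θ₂}` for every
axes-parallel rectangle `R`, where `σ = w^{-1/(p-1)}` and `C` is absolute. -/
theorem statement13 :
    ∃ C : ℝ, 0 < C ∧ ∀ p p' : ℝ, 1 < p → 1 / p + 1 / p' = 1 →
      ∀ θ₂ : ℝ, θ₂ ∈ Ioc (0:ℝ) 1 →
      ∀ φ : ℝ → ℝ, Measurable φ → (∀ t, 0 ≤ φ t) → (∀ t ∈ Icc (-1:ℝ) 1, 1 ≤ φ t) →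
      ∀ w : ℝ × ℝ → ℝ, Measurable w → (∀ x, 0 < w x) →
        LocallyIntegrable w volume →
        LocallyIntegrable (fun x => w x ^ (-1 / (p - 1))) volume →
      ∀ N : ℝ, 0 ≤ N →
      (∀ t₁ t₂ : ℝ, 0 < t₁ → 0 < t₂ →
        ∀ f : ℝ × ℝ → ℝ, Measurable f → (∀ x, 0 ≤ f x) →
          (∫⁻ x, (∫⁻ y, ENNReal.ofReal (KphiR θ₂ t₁ t₂ φ (x - y) * f y)) ^ p *
              ENNReal.ofReal (w x)) ^ (1 / p) ≤
            ENNReal.ofReal N *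
              (∫⁻ x, ENNReal.ofReal (f x) ^ p * ENNReal.ofReal (w x)) ^ (1 / p)) →
      ∀ (c : ℝ × ℝ) (t₁ t₂ : ℝ), 0 < t₁ → 0 < t₂ →
        ((∫⁻ x in rect c t₁ t₂, ENNReal.ofReal (w x)) / volume (rect c t₁ t₂)) ^ (1 / p) *
          ((∫⁻ x in rect c t₁ t₂, ENNReal.ofReal (w x ^ (-1 / (p - 1)))) /
              volume (rect c t₁ t₂)) ^ (1 / p') ≤
          ENNReal.ofReal (C * N * max (t₁ / t₂) (t₂ / t₁) ^ θ₂) := by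
  refine ⟨2, two_pos, ?_⟩
  intro p p' hp hpp' θ₂ hθ₂ φ _ hφ0 hφ1 w hw hw0 _ hσloc N hN hbound c t₁ t₂ ht₁ ht₂
  set s := t₁ / t₂ + t₂ / t₁
  set δ := s ^ (-θ₂) / (t₁ * t₂)
  have hp0 : 0 < p := one_pos.trans hp
  have hp' : 0 < 1 / p' := by linarith [(div_lt_one hp0).mpr hp]
  have hδ : 0 < δ := by positivity
  have hσ0 : ∀ x, 0 ≤ w x ^ (-1 / (p - 1)) := fun x => Real.rpow_nonneg (hw0 x).le _
  have hσR := (hσloc.integrableOn_isCompact (isCompact_rect c t₁ t₂)).lintegral_lt_top.ne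
  have htest := ofReal_mul_setLIntegral_rpow_mul_setLIntegral_rpow_le (measurableSet_rect c t₁ t₂)
    hp hpp' hσ0 (fun x => Real.rpow_neg_one_div_sub_one_rpow_mul_self (hw0 x) hp.ne') hσR hδ.le
    (fun x hx y hy => div_le_KphiR_sub_of_mem_rect ht₁ ht₂ hφ0 hφ1 hx hy)
    (hbound t₁ t₂ ht₁ ht₂ _ ((hw.pow_const _).indicator (measurableSet_rect c t₁ t₂))
      (fun x => indicator_nonneg (fun y _ => hσ0 y) x))
  have hV0 : ENNReal.ofReal (t₁ * t₂) ≠ 0 := by positivity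
  rw [volume_rect c ht₁.le,
    ENNReal.div_rpow_mul_div_rpow (by positivity) hp'.le hpp' hV0 ENNReal.ofReal_ne_top]
  calc _ ≤ ENNReal.ofReal (N / δ) / ENNReal.ofReal (t₁ * t₂) := by
        gcongr
        rwa [ENNReal.ofReal_div_of_pos hδ, ENNReal.le_div_iff_mul_le (by simp [hδ]) (by simp),
          mul_comm, ← mul_assoc]
    _ = ENNReal.ofReal (N * s ^ θ₂) := by
        rw [← ENNReal.ofReal_div_of_pos (by positivity)]
        simp only [δ, Real.rpow_neg (by positivity : 0 ≤ s)]
        field_simp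
    _ ≤ ENNReal.ofReal (2 * N * max (t₁ / t₂) (t₂ / t₁) ^ θ₂) := ENNReal.ofReal_le_ofReal <|
        (mul_le_mul_of_nonneg_left (Real.add_rpow_le_two_mul_max_rpow (by positivity)
          (by positivity) ⟨hθ₂.1.le, hθ₂.2⟩) hN).trans_eq (by ring)
end
end
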